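/- arXiv:2310.14537 — 2 statements merged into one kernel-verified Lean document; each statement's English description precedes it below -/
import Mathlib

section
/- For the Poisson distribution of order k, the probability of the value 0 is e^{−kλ}, and for 1 ≤ n ≤ k the probability mass at n is e^{−kλ} · ∑_{j=1}^{n} C(n−1, j−1) λ^j / j!. -/
open scoped BigOperators

/-- The probability mass function of the Poisson distribution of order `k`
with rate `lam`: the law of `Y = ∑_{i=1}^k i · N_i` where the `N_i` are
i.i.d. Poisson(`lam`). -/
noncomputable def poissonOrderKPMF (k : ℕ) (lam : ℝ) (n : ℕ) : ℝ :=
  ∑' m : Fin k → ℕ,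
    if (∑ i : Fin k, (i.1 + 1) * m i) = n then
      ∏ i : Fin k, Real.exp (-lam) * lam ^ (m i) / (Nat.factorial (m i))
    else 0

/-!
With `S = x + x² + ⋯ + xᵏ`, the pgf is `e^{-kλ} exp(λ S) = e^{-kλ} ∑ⱼ λʲ Sʲ / j!`; on the level of
the defining sum this is the multinomial theorem, after grouping the tuples `m` by `j = ∑ mᵢ`.
For `n ≤ k` the series `S` agrees with `x / (1 - x)` up to order `k`, and the coefficient of `xⁿ`
in `(x / (1 - x))ʲ` is `C(n - 1, j - 1)`.
-/

open Finset PowerSeries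
open scoped Nat

theorem prod_pow_div_factorial {ι K : Type*} [Field K] [CharZero K] (s : Finset ι) (x : K)
    (m : ι → ℕ) :
    ∏ i ∈ s, x ^ m i / (m i)! = Nat.multinomial s m * (x ^ (∑ i ∈ s, m i) / (∑ i ∈ s, m i)!) := by
  have hfact : ∏ i ∈ s, ((m i)! : K) ≠ 0 :=
    prod_ne_zero_iff.mpr fun i _ => by exact_mod_cast (m i).factorial_ne_zero
  have hmult : (Nat.multinomial s m : K) ≠ 0 := by exact_mod_cast (Nat.multinomial_pos _ _).ne'
  rw [prod_div_distrib, prod_pow_eq_pow_sum, ← Nat.multinomial_spec s m]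
  push_cast
  field_simp

theorem prod_exp_neg_mul_pow_div_factorial {ι : Type*} [Fintype ι] (lam : ℝ) (m : ι → ℕ) :
    ∏ i, Real.exp (-lam) * lam ^ m i / (m i)! =
      Real.exp (-(Fintype.card ι * lam)) *
        (Nat.multinomial univ m * (lam ^ (∑ i, m i) / (∑ i, m i)!)) := by
  simp_rw [mul_div_assoc, prod_mul_distrib, prod_pow_div_factorial, prod_const, card_univ,
    ← Real.exp_nat_mul, mul_neg]

section Coefficients

variable {R : Type*}

theorem coeff_sum_X_pow_succ_pow [CommSemiring R] (k j n : ℕ) :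
    coeff n ((∑ i : Fin k, X ^ (i.1 + 1) : R⟦X⟧) ^ j) =
      ∑ m ∈ piAntidiag univ j,
        if ∑ i : Fin k, (i.1 + 1) * m i = n then (Nat.multinomial univ m : R) else 0 := by
  rw [sum_pow_eq_sum_piAntidiag, map_sum]
  refine sum_congr rfl fun m _ => ?_
  simp_rw [← pow_mul, prod_pow_eq_pow_sum, ← map_natCast (C (R := R)), coeff_C_mul_X_pow]
  simp only [eq_comm]

theorem coeff_geom_sum_pow [CommRing R] {k m : ℕ} (hm : m < k) (j : ℕ) :
    coeff m ((∑ i ∈ range k, X ^ i : R⟦X⟧) ^ j) = coeff m ((PowerSeries.mk 1 : R⟦X⟧) ^ j) := by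
  have htail : (X : R⟦X⟧) ^ k ∣ PowerSeries.mk 1 - ∑ i ∈ range k, X ^ i := by
    refine X_pow_dvd_iff.mpr fun d hd => ?_
    simp [coeff_X_pow, hd]
  have := X_pow_dvd_iff.mp (htail.trans (sub_dvd_pow_sub_pow _ _ j)) m hm
  rwa [map_sub, sub_eq_zero, eq_comm] at this

theorem coeff_sum_X_pow_succ_pow_of_le [CommRing R] {k j n : ℕ} (hj : 1 ≤ j) (hjn : j ≤ n)
    (hnk : n ≤ k) :
    coeff n ((∑ i : Fin k, X ^ (i.1 + 1) : R⟦X⟧) ^ j) = (n - 1).choose (j - 1) := by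
  have hfactor : ∑ i : Fin k, (X : R⟦X⟧) ^ (i.1 + 1) = X * ∑ i ∈ range k, X ^ i := by
    rw [Fin.sum_univ_eq_sum_range (fun i => (X : R⟦X⟧) ^ (i + 1)), mul_sum]
    simp_rw [pow_succ']
  obtain ⟨d, rfl⟩ : ∃ d, j = d + 1 := ⟨j - 1, by omega⟩
  obtain ⟨e, rfl⟩ : ∃ e, n = e + (d + 1) := ⟨n - (d + 1), by omega⟩
  rw [hfactor, mul_pow, coeff_X_pow_mul, coeff_geom_sum_pow (by omega),
    mk_one_pow_eq_mk_choose_add, coeff_mk]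
  congr 2
  omega

end Coefficients

theorem poissonOrderKPMF_eq_sum_coeff (k : ℕ) (lam : ℝ) (n : ℕ) :
    poissonOrderKPMF k lam n = Real.exp (-(k * lam)) *
      ∑ j ∈ range (n + 1), coeff n ((∑ i : Fin k, X ^ (i.1 + 1) : ℝ⟦X⟧) ^ j) * lam ^ j / j ! := by
  have hsupp : ∀ m ∉ (range (n + 1)).biUnion (piAntidiag univ),
      (if ∑ i : Fin k, (i.1 + 1) * m i = n then
        ∏ i : Fin k, Real.exp (-lam) * lam ^ m i / (m i)! else 0) = 0 := by
    intro m hm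
    refine if_neg fun hweight => hm ?_
    have : ∑ i, m i ≤ ∑ i : Fin k, (i.1 + 1) * m i :=
      sum_le_sum fun i _ => Nat.le_mul_of_pos_left _ i.1.succ_pos
    simp only [mem_biUnion, mem_range, mem_piAntidiag]
    exact ⟨∑ i, m i, by omega, rfl, by simp⟩
  have hdisj : (range (n + 1) : Set ℕ).PairwiseDisjoint (piAntidiag (univ : Finset (Fin k))) :=
    fun i _ j _ hij => disjoint_left.mpr fun m hi hj => hij <| by
      rw [mem_piAntidiag] at hi hj
      rw [← hi.1, hj.1]
  rw [poissonOrderKPMF, tsum_eq_sum hsupp, sum_biUnion hdisj, mul_sum]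
  refine sum_congr rfl fun j _ => ?_
  rw [coeff_sum_X_pow_succ_pow, sum_mul, sum_div, mul_sum]
  refine sum_congr rfl fun m hm => ?_
  split_ifs
  · rw [prod_exp_neg_mul_pow_div_factorial, (mem_piAntidiag.mp hm).1, Fintype.card_fin]
    ring
  · simp

theorem poissonOrderK_pmf_eq_general (k : ℕ) (lam : ℝ) :
    poissonOrderKPMF k lam 0 = Real.exp (-(k * lam)) ∧
    ∀ n : ℕ, 1 ≤ n → n ≤ k →
      poissonOrderKPMF k lam n =
        Real.exp (-(k * lam)) *
          ∑ j ∈ Finset.Icc 1 n,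
            ((n - 1).choose (j - 1) : ℝ) * lam ^ j / (Nat.factorial j) := by
  refine ⟨by simp [poissonOrderKPMF_eq_sum_coeff], fun n hn hnk => ?_⟩
  rw [poissonOrderKPMF_eq_sum_coeff, range_eq_Ico, sum_eq_sum_Ico_succ_bot (by omega),
    pow_zero, coeff_one, if_neg (by omega), zero_mul, zero_div, zero_add]
  congr 1
  refine sum_congr (by ext; simp) fun j hj => ?_
  obtain ⟨hj, hjn⟩ := mem_Icc.mp hj
  rw [coeff_sum_X_pow_succ_pow_of_le hj hjn hnk]

/-- For the Poisson distribution of order `k`, `p₀ = e^{-kλ}` and, for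
`1 ≤ n ≤ k`, `pₙ = e^{-kλ} ∑_{j=1}^{n} C(n-1, j-1) λ^j / j!`. -/
theorem poissonOrderK_pmf_eq (k : ℕ) (hk : 1 ≤ k) (lam : ℝ) (hlam : 0 < lam) :
    poissonOrderKPMF k lam 0 = Real.exp (-(k * lam)) ∧
    ∀ n : ℕ, 1 ≤ n → n ≤ k →
      poissonOrderKPMF k lam n =
        Real.exp (-(k * lam)) *
          ∑ j ∈ Finset.Icc 1 n,
            ((n - 1).choose (j - 1) : ℝ) * lam ^ j / (Nat.factorial j) :=
  poissonOrderK_pmf_eq_general k lam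
end

section
/- For each integer k ≥ 2 there exists a unique λ > 0 satisfying e^{kλ}/2 = 1 + λ, and this λ lies in the interval ((ln 2)/k, (ln 2)/(k−1)]. -/
/-!
Put `g x = exp (k x) - 2 (1 + x)`, whose zeros are the solutions. For `k ≥ 2`, `g` is strictly
increasing on `[0, ∞)`: writing `exp (k y) = exp (k x) exp (k (y - x))` with `exp (k x) ≥ 1` and
`exp t - 1 > t`, the increment of `exp (k ·)` beats `k (y - x) ≥ 2 (y - x)`. At `a = log 2 / k`
we get `g a = -2a < 0`, and at `b = log 2 / (k - 1)` we have `k b = log 2 + b`, so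
`exp (k b) = 2 exp b ≥ 2 (1 + b)`, i.e. `g b ≥ 0`. The intermediate value theorem and
monotonicity then place exactly one positive zero in `(a, b]`.
-/

open Real Set

theorem strictMonoOn_exp_mul_sub_two_mul_one_add {k : ℝ} (hk : 2 ≤ k) :
    StrictMonoOn (fun x => exp (k * x) - 2 * (1 + x)) (Ici 0) := by
  intro x hx y _ hxy
  have hx0 : 0 ≤ x := hx
  have hd : 0 < k * (y - x) := mul_pos (by linarith) (sub_pos.2 hxy)
  have hone : 1 ≤ exp (k * x) := one_le_exp (by positivity)
  have hgap : k * (y - x) + 1 < exp (k * (y - x)) := add_one_lt_exp hd.ne'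
  have hsplit : exp (k * y) = exp (k * x) * exp (k * (y - x)) := by
    rw [← exp_add]; ring_nf
  dsimp only
  nlinarith [mul_nonneg (sub_nonneg.2 hone) (sub_nonneg.2 (one_le_exp hd.le)),
    mul_nonneg (sub_nonneg.2 hk) (sub_nonneg.2 hxy.le)]

theorem exp_mul_log_two_div {k : ℝ} (hk : k ≠ 0) : exp (k * (log 2 / k)) = 2 := by
  rw [mul_div_cancel₀ _ hk, exp_log two_pos]

theorem two_mul_one_add_le_exp_mul_log_two_div_sub_one {k : ℝ} (hk : k ≠ 1) :
    2 * (1 + log 2 / (k - 1)) ≤ exp (k * (log 2 / (k - 1))) := by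
  set b := log 2 / (k - 1)
  have hkb : k * b = log 2 + b := by
    have : (k - 1) * b = log 2 := mul_div_cancel₀ _ (sub_ne_zero.2 hk)
    linarith
  rw [hkb, exp_add, exp_log two_pos]
  linarith [add_one_le_exp b]

/-- For each integer `k ≥ 2` there is a unique `λ > 0` with `e^{kλ}/2 = 1 + λ`,
and this `λ` lies in `((ln 2)/k, (ln 2)/(k-1)]`. -/
theorem median_one_threshold_exists_unique (k : ℕ) (hk : 2 ≤ k) :
    (∃! lam : ℝ, 0 < lam ∧ Real.exp (k * lam) / 2 = 1 + lam) ∧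
    ∀ lam : ℝ, 0 < lam → Real.exp (k * lam) / 2 = 1 + lam →
      lam ∈ Set.Ioc (Real.log 2 / k) (Real.log 2 / ((k : ℝ) - 1)) := by
  have hk2 : (2 : ℝ) ≤ k := by exact_mod_cast hk
  set g : ℝ → ℝ := fun x => exp (k * x) - 2 * (1 + x) with hg
  have hmono : StrictMonoOn g (Ici 0) := strictMonoOn_exp_mul_sub_two_mul_one_add hk2
  have hroot (lam : ℝ) : exp (k * lam) / 2 = 1 + lam ↔ g lam = 0 := by
    simp only [hg]; constructor <;> intro h <;> linarith
  have ha : 0 < log 2 / k := div_pos (log_pos one_lt_two) (by linarith)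
  have hb : 0 < log 2 / ((k : ℝ) - 1) := div_pos (log_pos one_lt_two) (by linarith)
  have hga : g (log 2 / k) < 0 := by
    simp only [hg, exp_mul_log_two_div (k := (k : ℝ)) (by linarith)]; linarith
  have hgb : 0 ≤ g (log 2 / ((k : ℝ) - 1)) := by
    simp only [hg]
    linarith [two_mul_one_add_le_exp_mul_log_two_div_sub_one (k := k) (by linarith)]
  set a := log 2 / k
  set b := log 2 / ((k : ℝ) - 1)
  have hloc (lam : ℝ) (hlam : 0 < lam) (h0 : g lam = 0) : lam ∈ Ioc a b :=
    ⟨(hmono.lt_iff_lt ha.le hlam.le).1 (by linarith),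
      (hmono.le_iff_le hlam.le hb.le).1 (by linarith)⟩
  have hab : a ≤ b := (hmono.le_iff_le ha.le hb.le).1 (by linarith)
  obtain ⟨c, hc, hgc⟩ := intermediate_value_Icc hab (by fun_prop : Continuous g).continuousOn
    ⟨hga.le, hgb⟩
  have hc0 : 0 < c := ha.trans_le hc.1
  refine ⟨⟨c, ⟨hc0, (hroot c).2 hgc⟩, fun y ⟨hy, hyc⟩ => ?_⟩,
    fun lam hlam h => hloc lam hlam ((hroot lam).1 h)⟩
  exact hmono.injOn hy.le hc0.le (((hroot y).1 hyc).trans hgc.symm)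
end
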